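/- arXiv:2408.09200 — 2 statements merged into one kernel-verified Lean document; each statement's English description precedes it below -/
import Mathlib

section
/- Let (J, ·) be a Jordan superalgebra and α, β two commuting even superalgebra endomorphisms of J. Define x ·_{α,β} y = α(x) · β(y). Then (J, ·_{α,β}, α, β) is a BiHom-Jordan superalgebra. -/
noncomputable section

/-- The super sign `(-1)^{pq}` for parities `p q : ZMod 2`. -/
def sgn (𝕜 : Type*) [Field 𝕜] (p q : ZMod 2) : 𝕜 := (-1 : 𝕜) ^ (p * q).val

section SuperDefs

variable {𝕜 J V W : Type*} [Field 𝕜]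
  [AddCommGroup J] [Module 𝕜 J]
  [AddCommGroup V] [Module 𝕜 V]
  [AddCommGroup W] [Module 𝕜 W]

/-- An even linear endomorphism with respect to a `ZMod 2`-grading. -/
def IsEvenMap (Jg : ZMod 2 → Submodule 𝕜 J) (f : J →ₗ[𝕜] J) : Prop :=
  ∀ p x, x ∈ Jg p → f x ∈ Jg p

/-- An even bilinear multiplication with respect to a `ZMod 2`-grading. -/
def IsEvenMul (Jg : ZMod 2 → Submodule 𝕜 J) (mul : J →ₗ[𝕜] J →ₗ[𝕜] J) : Prop :=
  ∀ p q x y, x ∈ Jg p → y ∈ Jg q → mul x y ∈ Jg (p + q)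

/-- `φ` is an algebra morphism for `mul`. -/
def IsMultiplicative (mul : J →ₗ[𝕜] J →ₗ[𝕜] J) (φ : J →ₗ[𝕜] J) : Prop :=
  ∀ x y, φ (mul x y) = mul (φ x) (φ y)

/-- The associator. -/
def jas (mul : J →ₗ[𝕜] J →ₗ[𝕜] J) (x y z : J) : J :=
  mul (mul x y) z - mul x (mul y z)

/-- A Jordan superalgebra structure on a `ZMod 2`-graded vector space. -/
def IsJordanSuper (Jg : ZMod 2 → Submodule 𝕜 J) (mul : J →ₗ[𝕜] J →ₗ[𝕜] J) : Prop :=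
  IsEvenMul Jg mul ∧
  (∀ p q x y, x ∈ Jg p → y ∈ Jg q → mul x y = sgn 𝕜 p q • mul y x) ∧
  (∀ px py pz pt (x y z t : J), x ∈ Jg px → y ∈ Jg py → z ∈ Jg pz → t ∈ Jg pt →
    sgn 𝕜 pt (px + pz) • jas mul (mul x y) z t +
    sgn 𝕜 px (py + pz) • jas mul (mul y t) z x +
    sgn 𝕜 py (pt + pz) • jas mul (mul t x) z y = 0)

/-- The BiHom-associator `ass_{α,β}`. -/
def bass (mul : J →ₗ[𝕜] J →ₗ[𝕜] J) (α β : J →ₗ[𝕜] J) (x y z : J) : J :=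
  mul (mul x y) (β z) - mul (α x) (mul y z)

/-- A BiHom-Jordan superalgebra structure. -/
def IsBiHomJordanSuper (Jg : ZMod 2 → Submodule 𝕜 J)
    (mul : J →ₗ[𝕜] J →ₗ[𝕜] J) (α β : J →ₗ[𝕜] J) : Prop :=
  IsEvenMul Jg mul ∧ IsEvenMap Jg α ∧ IsEvenMap Jg β ∧
  (∀ x, α (β x) = β (α x)) ∧
  (∀ p q x y, x ∈ Jg p → y ∈ Jg q → mul (β x) (α y) = sgn 𝕜 p q • mul (β y) (α x)) ∧
  (∀ px py pz pt (x y z t : J), x ∈ Jg px → y ∈ Jg py → z ∈ Jg pz → t ∈ Jg pt →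
    sgn 𝕜 pt (px + pz) •
      bass mul α β (mul (β (β x)) (α (β y))) (α (α (β z))) (α (α (α t))) +
    sgn 𝕜 px (py + pz) •
      bass mul α β (mul (β (β y)) (α (β t))) (α (α (β z))) (α (α (α x))) +
    sgn 𝕜 py (pt + pz) •
      bass mul α β (mul (β (β t)) (α (β x))) (α (α (β z))) (α (α (α y))) = 0)

/-- A representation of a BiHom-Jordan superalgebra `(J, mul, α, β)` on `(V, ρ, αV, βV)`. -/
def IsRep (Jg : ZMod 2 → Submodule 𝕜 J) (mul : J →ₗ[𝕜] J →ₗ[𝕜] J) (α β : J →ₗ[𝕜] J)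
    (Vg : ZMod 2 → Submodule 𝕜 V) (ρ : J →ₗ[𝕜] V →ₗ[𝕜] V) (αV βV : V ≃ₗ[𝕜] V) : Prop :=
  (∀ p q x v, x ∈ Jg p → v ∈ Vg q → ρ x v ∈ Vg (p + q)) ∧
  (∀ p v, v ∈ Vg p → αV v ∈ Vg p) ∧
  (∀ p v, v ∈ Vg p → βV v ∈ Vg p) ∧
  (∀ v, αV (βV v) = βV (αV v)) ∧
  (∀ x v, αV (ρ x v) = ρ (α x) (αV v)) ∧
  (∀ x v, βV (ρ x v) = ρ (β x) (βV v)) ∧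
  (∀ px py pz (x y z : J), x ∈ Jg px → y ∈ Jg py → z ∈ Jg pz → ∀ v : V,
    sgn 𝕜 px pz • ρ (mul (α (β (β x))) (α (α (β y)))) (ρ (α (α (β z))) (αV (αV (αV v)))) +
    sgn 𝕜 py px • ρ (mul (α (β (β y))) (α (α (β z)))) (ρ (α (α (β x))) (αV (αV (αV v)))) +
    sgn 𝕜 pz py • ρ (mul (α (β (β z))) (α (α (β x)))) (ρ (α (α (β y))) (αV (αV (αV v)))) =
    sgn 𝕜 px pz • ρ (mul (mul (β (β x)) (α (β y))) (α (α (β z)))) (βV (αV (αV (αV v)))) +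
    sgn 𝕜 px (py + pz) •
      ρ (α (α (β (β x)))) (ρ (α (α (β z))) (ρ (α (α y)) (βV.symm (αV (αV (αV v)))))) +
    sgn 𝕜 px py •
      ρ (α (α (β (β y)))) (ρ (α (α (β z))) (ρ (α (α x)) (βV.symm (αV (αV (αV v))))))) ∧
  (∀ px py pz (x y z : J), x ∈ Jg px → y ∈ Jg py → z ∈ Jg pz → ∀ v : V,
    sgn 𝕜 px pz • ρ (α (α (β (β x)))) (ρ (mul (α (β y)) (α (α z))) (αV (αV (αV v)))) +
    sgn 𝕜 py px • ρ (α (α (β (β y)))) (ρ (mul (α (β z)) (α (α x))) (αV (αV (αV v)))) +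
    sgn 𝕜 pz py • ρ (α (α (β (β z)))) (ρ (mul (α (β x)) (α (α y))) (αV (αV (αV v)))) =
    sgn 𝕜 px pz • ρ (mul (α (β (β x))) (α (α (β y)))) (ρ (α (α (β z))) (αV (αV (αV v)))) +
    sgn 𝕜 py px • ρ (mul (α (β (β y))) (α (α (β z)))) (ρ (α (α (β x))) (αV (αV (αV v)))) +
    sgn 𝕜 pz py • ρ (mul (α (β (β z))) (α (α (β x)))) (ρ (α (α (β y))) (αV (αV (αV v)))))

/-- An `𝒪`-operator of parity `pT` of a BiHom-Jordan superalgebra associated to a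
representation `(V, ρ, αV, βV)`. -/
def IsOOperator (Jg : ZMod 2 → Submodule 𝕜 J) (mul : J →ₗ[𝕜] J →ₗ[𝕜] J) (α β : J →ₗ[𝕜] J)
    (Vg : ZMod 2 → Submodule 𝕜 V) (ρ : J →ₗ[𝕜] V →ₗ[𝕜] V) (αV βV : V ≃ₗ[𝕜] V)
    (pT : ZMod 2) (T : V →ₗ[𝕜] J) : Prop :=
  (∀ q v, v ∈ Vg q → T v ∈ Jg (q + pT)) ∧
  (∀ v, α (T v) = T (αV v)) ∧
  (∀ v, β (T v) = T (βV v)) ∧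
  (∀ pu pv (u v : V), u ∈ Vg pu → v ∈ Vg pv →
    mul (T u) (T v) =
      T (sgn 𝕜 pT (pT + pu) • ρ (T u) v +
         sgn 𝕜 pu (pv + pT) • ρ (T (αV.symm (βV v))) (αV (βV.symm u))))

/-- A BiHom-pre-Jordan superalgebra structure, with `star` the associated
super-symmetrized product. -/
def IsBiHomPreJordanSuper (Jg : ZMod 2 → Submodule 𝕜 J)
    (circ star : J →ₗ[𝕜] J →ₗ[𝕜] J) (α β : J ≃ₗ[𝕜] J) : Prop :=
  IsEvenMul Jg circ ∧ IsEvenMap Jg α.toLinearMap ∧ IsEvenMap Jg β.toLinearMap ∧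
  (∀ x, α (β x) = β (α x)) ∧
  (∀ x y, α (circ x y) = circ (α x) (α y)) ∧
  (∀ x y, β (circ x y) = circ (β x) (β y)) ∧
  (∀ p q x y, x ∈ Jg p → y ∈ Jg q →
    star x y = circ x y + sgn 𝕜 p q • circ (α.symm (β y)) (α (β.symm x))) ∧
  (∀ px py pz pt (x y z t : J), x ∈ Jg px → y ∈ Jg py → z ∈ Jg pz → t ∈ Jg pt →
    sgn 𝕜 px pz • circ (star (α (β (β x))) (α (α (β y)))) (circ (α (α (β z))) (α (α (α t)))) +
    sgn 𝕜 py px • circ (star (α (β (β y))) (α (α (β z)))) (circ (α (α (β x))) (α (α (α t)))) +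
    sgn 𝕜 pz py • circ (star (α (β (β z))) (α (α (β x)))) (circ (α (α (β y))) (α (α (α t)))) =
    sgn 𝕜 px pz • circ (star (star (β (β x)) (α (β y))) (α (α (β z)))) (α (α (α (β t)))) +
    sgn 𝕜 px (py + pz) •
      circ (α (α (β (β x)))) (circ (α (α (β z))) (circ (α (α y)) (α (α (α (β.symm t)))))) +
    sgn 𝕜 px py •
      circ (α (α (β (β y)))) (circ (α (α (β z))) (circ (α (α x)) (α (α (α (β.symm t))))))) ∧
  (∀ px py pz pt (x y z t : J), x ∈ Jg px → y ∈ Jg py → z ∈ Jg pz → t ∈ Jg pt →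
    sgn 𝕜 px pz • circ (α (α (β (β x)))) (circ (star (α (β y)) (α (α z))) (α (α (α t)))) +
    sgn 𝕜 py px • circ (α (α (β (β y)))) (circ (star (α (β z)) (α (α x))) (α (α (α t)))) +
    sgn 𝕜 pz py • circ (α (α (β (β z)))) (circ (star (α (β x)) (α (α y))) (α (α (α t)))) =
    sgn 𝕜 px pz • circ (star (α (β (β x))) (α (α (β y)))) (circ (α (α (β z))) (α (α (α t)))) +
    sgn 𝕜 py px • circ (star (α (β (β y))) (α (α (β z)))) (circ (α (α (β x))) (α (α (α t)))) +
    sgn 𝕜 pz py • circ (star (α (β (β z))) (α (α (β x)))) (circ (α (α (β y))) (α (α (α t)))))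

/-- A BiHom-super-bimodule `(V, l, r, αV, βV)` of a BiHom-Jordan superalgebra. -/
def IsBiHomSuperBimodule (Jg : ZMod 2 → Submodule 𝕜 J)
    (mul : J →ₗ[𝕜] J →ₗ[𝕜] J) (α β : J →ₗ[𝕜] J)
    (Vg : ZMod 2 → Submodule 𝕜 V) (l r : J →ₗ[𝕜] V →ₗ[𝕜] V) (αV βV : V →ₗ[𝕜] V) : Prop :=
  (∀ p q x v, x ∈ Jg p → v ∈ Vg q → l x v ∈ Vg (p + q)) ∧
  (∀ p q x v, x ∈ Jg p → v ∈ Vg q → r x v ∈ Vg (p + q)) ∧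
  (∀ p v, v ∈ Vg p → αV v ∈ Vg p) ∧
  (∀ p v, v ∈ Vg p → βV v ∈ Vg p) ∧
  (∀ v, αV (βV v) = βV (αV v)) ∧
  (∀ x v, l (β x) (αV v) = r (α x) (βV v)) ∧
  (∀ px py pz (x y z : J), x ∈ Jg px → y ∈ Jg py → z ∈ Jg pz → ∀ v : V,
    l (mul (mul (β (β x)) (α (β y))) (α (α (β z)))) (αV (αV (αV (βV v)))) -
    l (mul (α (β (β x))) (α (α (β y)))) (l (α (α (β z))) (αV (αV (αV v)))) =
    sgn 𝕜 pz (px + py) •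
      r (mul (α (α (β z))) (α (α (α x)))) (αV (l (β (β y)) (αV (βV v)))) -
    sgn 𝕜 py pz •
      r (α (α (α (β x)))) (r (α (α (β z))) (l (β (β y)) (αV (βV v)))) +
    sgn 𝕜 pz (px + py) •
      r (mul (α (α (β z))) (α (α (α y)))) (αV (r (α (β x)) (βV (βV v)))) -
    sgn 𝕜 px (py + pz) •
      r (α (α (α (β y)))) (r (α (α (β z))) (r (α (β x)) (βV (βV v))))) ∧
  (∀ px py pz (x y z : J), x ∈ Jg px → y ∈ Jg py → z ∈ Jg pz → ∀ v : V,
    r (α (α (α (β x)))) (l (mul (β (β y)) (α (β z))) (αV (αV (βV v)))) -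
    l (mul (α (β (β y))) (α (α (β z)))) (r (α (α (α x))) (αV (αV (βV v)))) =
    sgn 𝕜 pz (px + py) •
      l (α (mul (β (β z)) (α (β x)))) (r (α (α (α y))) (αV (αV (βV v)))) -
    sgn 𝕜 px (py + pz) •
      r (α (α (α (β y)))) (l (mul (β (β z)) (α (β x))) (αV (αV (βV v)))) +
    l (α (mul (β (β x)) (α (β y)))) (r (α (α (α z))) (αV (αV (βV v)))) -
    sgn 𝕜 pz (px + py) •
      r (α (α (α (β z)))) (l (mul (β (β x)) (α (β y))) (αV (αV (βV v)))))

/-- An isomorphism of two representations of a BiHom-Jordan superalgebra. -/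
def IsRepIso (Jg : ZMod 2 → Submodule 𝕜 J)
    (Vg : ZMod 2 → Submodule 𝕜 V) (ρ₁ : J →ₗ[𝕜] V →ₗ[𝕜] V) (α₁ β₁ : V ≃ₗ[𝕜] V)
    (Wg : ZMod 2 → Submodule 𝕜 W) (ρ₂ : J →ₗ[𝕜] W →ₗ[𝕜] W) (α₂ β₂ : W ≃ₗ[𝕜] W)
    (Φ : V ≃ₗ[𝕜] W) : Prop :=
  (∀ p v, v ∈ Vg p → Φ v ∈ Wg p) ∧
  (∀ v, Φ (α₁ v) = α₂ (Φ v)) ∧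
  (∀ v, Φ (β₁ v) = β₂ (Φ v)) ∧
  (∀ (x : J) (v : V), Φ (ρ₁ x v) = ρ₂ x (Φ v))

/-- The induced grading on the dual space: `ξ` has parity `p` iff `ξ` kills `Vg (p+1)`. -/
def dualGrading (Vg : ZMod 2 → Submodule 𝕜 V) (p : ZMod 2) :
    Submodule 𝕜 (Module.Dual 𝕜 V) where
  carrier := {ξ | ∀ v ∈ Vg (p + 1), ξ v = 0}
  add_mem' := by
    intro a b ha hb v hv
    simp [ha v hv, hb v hv]
  zero_mem' := by intro v hv; simp
  smul_mem' := by
    intro c ξ hξ v hv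
    simp [hξ v hv]

end SuperDefs


section YauTwist

variable {𝕜 J : Type*} [Field 𝕜] [AddCommGroup J] [Module 𝕜 J]

def yauTwist (mul : J →ₗ[𝕜] J →ₗ[𝕜] J) (α β : J →ₗ[𝕜] J) : J →ₗ[𝕜] J →ₗ[𝕜] J :=
  (mul ∘ₗ α).compl₂ β

@[simp]
theorem yauTwist_apply (mul : J →ₗ[𝕜] J →ₗ[𝕜] J) (α β : J →ₗ[𝕜] J) (x y : J) :
    yauTwist mul α β x y = mul (α x) (β y) :=
  rfl

variable {Jg : ZMod 2 → Submodule 𝕜 J} {mul : J →ₗ[𝕜] J →ₗ[𝕜] J} {α β : J →ₗ[𝕜] J}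

theorem IsEvenMul.yauTwist (hmul : IsEvenMul Jg mul) (hα : IsEvenMap Jg α)
    (hβ : IsEvenMap Jg β) : IsEvenMul Jg (yauTwist mul α β) :=
  fun p q x y hx hy => hmul p q _ _ (hα p x hx) (hβ q y hy)

theorem yauTwist_supercomm
    (hsym : ∀ p q x y, x ∈ Jg p → y ∈ Jg q → mul x y = sgn 𝕜 p q • mul y x)
    (hα : IsEvenMap Jg α) (hβ : IsEvenMap Jg β) (hcomm : ∀ x, α (β x) = β (α x))
    {p q : ZMod 2} {x y : J} (hx : x ∈ Jg p) (hy : y ∈ Jg q) :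
    yauTwist mul α β (β x) (α y) = sgn 𝕜 p q • yauTwist mul α β (β y) (α x) := by
  simp only [yauTwist_apply, hcomm]
  exact hsym p q _ _ (hβ p _ (hα p x hx)) (hβ q _ (hα q y hy))

theorem bass_yauTwist (hαm : IsMultiplicative mul α) (hβm : IsMultiplicative mul β)
    (hcomm : ∀ x, α (β x) = β (α x)) (x y z t : J) :
    bass (yauTwist mul α β) α β
        (yauTwist mul α β (β (β x)) (α (β y))) (α (α (β z))) (α (α (α t))) =
      jas mul (mul (β (β (α (α (α x))))) (β (β (α (α (α y))))))
        (β (β (α (α (α z))))) (β (β (α (α (α t))))) := by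
  unfold IsMultiplicative at hαm hβm
  simp only [bass, jas, yauTwist_apply, hαm, hβm, hcomm]

end YauTwist

theorem stmt0_general {𝕜 J : Type*} [Field 𝕜] [AddCommGroup J] [Module 𝕜 J]
    (Jg : ZMod 2 → Submodule 𝕜 J) (mul : J →ₗ[𝕜] J →ₗ[𝕜] J)
    (hJ : IsJordanSuper Jg mul)
    (α β : J →ₗ[𝕜] J)
    (hα : IsEvenMap Jg α) (hβ : IsEvenMap Jg β)
    (hcomm : ∀ x, α (β x) = β (α x))
    (hαm : IsMultiplicative mul α) (hβm : IsMultiplicative mul β)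
    (mulAB : J →ₗ[𝕜] J →ₗ[𝕜] J)
    (hAB : ∀ x y, mulAB x y = mul (α x) (β y)) :
    IsBiHomJordanSuper Jg mulAB α β := by
  obtain rfl : mulAB = yauTwist mul α β := LinearMap.ext₂ hAB
  obtain ⟨heven, hsym, hjordan⟩ := hJ
  refine ⟨heven.yauTwist hα hβ, hα, hβ, hcomm,
    fun p q x y hx hy => yauTwist_supercomm hsym hα hβ hcomm hx hy, ?_⟩
  intro px py pz pt x y z t hx hy hz ht
  have hΦ : ∀ p (w : J), w ∈ Jg p → β (β (α (α (α w)))) ∈ Jg p := fun p w hw =>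
    hβ p _ (hβ p _ (hα p _ (hα p _ (hα p w hw))))
  simp only [bass_yauTwist hαm hβm hcomm]
  exact hjordan px py pz pt _ _ _ _ (hΦ px x hx) (hΦ py y hy) (hΦ pz z hz) (hΦ pt t ht)

/-- Yau twist of a Jordan superalgebra is a BiHom-Jordan superalgebra. -/
theorem stmt0 {𝕜 J : Type*} [Field 𝕜] [CharZero 𝕜] [AddCommGroup J] [Module 𝕜 J]
    (Jg : ZMod 2 → Submodule 𝕜 J) (mul : J →ₗ[𝕜] J →ₗ[𝕜] J)
    (hJ : IsJordanSuper Jg mul)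
    (α β : J →ₗ[𝕜] J)
    (hα : IsEvenMap Jg α) (hβ : IsEvenMap Jg β)
    (hcomm : ∀ x, α (β x) = β (α x))
    (hαm : IsMultiplicative mul α) (hβm : IsMultiplicative mul β)
    (mulAB : J →ₗ[𝕜] J →ₗ[𝕜] J)
    (hAB : ∀ x y, mulAB x y = mul (α x) (β y)) :
    IsBiHomJordanSuper Jg mulAB α β :=
  stmt0_general Jg mul hJ α β hα hβ hcomm hαm hβm mulAB hAB
end
end

section
/- Let (V, ρ, α_V, β_V) be a representation of a BiHom-Jordan superalgebra (J, ·, α, β) and T an even O-operator of J associated to ρ. Then the product u ∘_V v = ρ(T(u))v defines a BiHom-pre-Jordan superalgebra structure (V, ∘_V, α_V, β_V) on V. -/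
noncomputable section

/-!
An even `𝒪`-operator `T` intertwines `αV, βV` with `α, β` and, by its defining identity,
`T (u ⋆ v) = T u · T v` for homogeneous `u, v`. Since `u ∘ v = ρ (T u) v`, each defining identity
of a BiHom-pre-Jordan superalgebra, evaluated at `x, y, z, t`, is the corresponding identity of
the representation `ρ` evaluated at `T x, T y, T z` and `t`.
-/

theorem LinearEquiv.apply_symm_apply_of_commute {𝕜 V : Type*} [Semiring 𝕜] [AddCommMonoid V]
    [Module 𝕜 V] {f g : V ≃ₗ[𝕜] V} (hfg : ∀ v, f (g v) = g (f v)) (v : V) :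
    f (g.symm v) = g.symm (f v) :=
  Function.Semiconj.inverses_right hfg g.apply_symm_apply g.symm_apply_apply v

section OOperator

variable {𝕜 J V : Type*} [Field 𝕜] [AddCommGroup J] [Module 𝕜 J] [AddCommGroup V] [Module 𝕜 V]
  {Jg : ZMod 2 → Submodule 𝕜 J} {mul : J →ₗ[𝕜] J →ₗ[𝕜] J} {α β : J →ₗ[𝕜] J}
  {Vg : ZMod 2 → Submodule 𝕜 V} {ρ : J →ₗ[𝕜] V →ₗ[𝕜] V} {αV βV : V ≃ₗ[𝕜] V}
  {T : V →ₗ[𝕜] J} {circ star : V →ₗ[𝕜] V →ₗ[𝕜] V}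

theorem IsOOperator.mem_of_mem (hT : IsOOperator Jg mul α β Vg ρ αV βV 0 T) {p : ZMod 2}
    {u : V} (hu : u ∈ Vg p) : T u ∈ Jg p := by
  simpa using hT.1 p u hu

theorem IsOOperator.map_star (hT : IsOOperator Jg mul α β Vg ρ αV βV 0 T)
    (hcirc : ∀ u v : V, circ u v = ρ (T u) v)
    (hstar : ∀ p q (u v : V), u ∈ Vg p → v ∈ Vg q →
        star u v = circ u v + sgn 𝕜 p q • circ (αV.symm (βV v)) (αV (βV.symm u)))
    {p q : ZMod 2} {u v : V} (hu : u ∈ Vg p) (hv : v ∈ Vg q) :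
    T (star u v) = mul (T u) (T v) := by
  rw [hstar p q u v hu hv, hT.2.2.2 p q u v hu hv]
  simp [hcirc, sgn]

theorem IsRep.mem_circ (hrep : IsRep Jg mul α β Vg ρ αV βV)
    (hT : IsOOperator Jg mul α β Vg ρ αV βV 0 T) (hcirc : ∀ u v : V, circ u v = ρ (T u) v)
    {p q : ZMod 2} {u v : V} (hu : u ∈ Vg p) (hv : v ∈ Vg q) : circ u v ∈ Vg (p + q) := by
  rw [hcirc]
  exact hrep.1 p q _ _ (hT.mem_of_mem hu) hv

theorem star_beta_alpha (hcom : ∀ v, αV (βV v) = βV (αV v))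
    (hstar : ∀ p q (u v : V), u ∈ Vg p → v ∈ Vg q →
        star u v = circ u v + sgn 𝕜 p q • circ (αV.symm (βV v)) (αV (βV.symm u)))
    {p q : ZMod 2} {x y : V} (hx : βV x ∈ Vg p) (hy : αV y ∈ Vg q) :
    star (βV x) (αV y) = circ (βV x) (αV y) + sgn 𝕜 p q • circ (βV y) (αV x) := by
  rw [hstar p q _ _ hx hy, ← hcom, LinearEquiv.symm_apply_apply, LinearEquiv.symm_apply_apply]

theorem IsOOperator.preJordan_first_identity (hrep : IsRep Jg mul α β Vg ρ αV βV)
    (hT : IsOOperator Jg mul α β Vg ρ αV βV 0 T) (hcirc : ∀ u v : V, circ u v = ρ (T u) v)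
    (hstar : ∀ p q (u v : V), u ∈ Vg p → v ∈ Vg q →
        star u v = circ u v + sgn 𝕜 p q • circ (αV.symm (βV v)) (αV (βV.symm u)))
    {px py pz : ZMod 2} {x y z : V} (hx : x ∈ Vg px) (hy : y ∈ Vg py) (hz : z ∈ Vg pz)
    (t : V) :
    sgn 𝕜 px pz • circ (star (αV (βV (βV x))) (αV (αV (βV y))))
        (circ (αV (αV (βV z))) (αV (αV (αV t)))) +
      sgn 𝕜 py px • circ (star (αV (βV (βV y))) (αV (αV (βV z))))
        (circ (αV (αV (βV x))) (αV (αV (αV t)))) +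
      sgn 𝕜 pz py • circ (star (αV (βV (βV z))) (αV (αV (βV x))))
        (circ (αV (αV (βV y))) (αV (αV (αV t)))) =
    sgn 𝕜 px pz • circ (star (star (βV (βV x)) (αV (βV y))) (αV (αV (βV z))))
        (αV (αV (αV (βV t)))) +
      sgn 𝕜 px (py + pz) • circ (αV (αV (βV (βV x))))
        (circ (αV (αV (βV z))) (circ (αV (αV y)) (αV (αV (αV (βV.symm t)))))) +
      sgn 𝕜 px py • circ (αV (αV (βV (βV y))))
        (circ (αV (αV (βV z))) (circ (αV (αV x)) (αV (αV (αV (βV.symm t)))))) := by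
  have ⟨_, hα, hβ, hcom, _, _, hax, _⟩ := hrep
  have hTs {p q : ZMod 2} {u v : V} (hu : u ∈ Vg p) (hv : v ∈ Vg q) :=
    hT.map_star hcirc hstar hu hv
  have hxy : star (βV (βV x)) (αV (βV y)) ∈ Vg (px + py) := by
    rw [star_beta_alpha hcom hstar (hβ _ _ (hβ _ _ hx)) (hα _ _ (hβ _ _ hy))]
    refine add_mem (hrep.mem_circ hT hcirc (hβ _ _ (hβ _ _ hx)) (hα _ _ (hβ _ _ hy)))
      (Submodule.smul_mem _ _ ?_)
    rw [add_comm]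
    exact hrep.mem_circ hT hcirc (hβ _ _ (hβ _ _ hy)) (hα _ _ (hβ _ _ hx))
  simp only [hcirc]
  rw [hTs (hα _ _ (hβ _ _ (hβ _ _ hx))) (hα _ _ (hα _ _ (hβ _ _ hy))),
    hTs (hα _ _ (hβ _ _ (hβ _ _ hy))) (hα _ _ (hα _ _ (hβ _ _ hz))),
    hTs (hα _ _ (hβ _ _ (hβ _ _ hz))) (hα _ _ (hα _ _ (hβ _ _ hx))),
    hTs hxy (hα _ _ (hα _ _ (hβ _ _ hz))),
    hTs (hβ _ _ (hβ _ _ hx)) (hα _ _ (hβ _ _ hy))]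
  simp only [← hT.2.1, ← hT.2.2.1]
  simp only [hcom, LinearEquiv.apply_symm_apply_of_commute hcom]
  exact hax px py pz _ _ _ (hT.mem_of_mem hx) (hT.mem_of_mem hy) (hT.mem_of_mem hz) t

theorem IsOOperator.preJordan_second_identity (hrep : IsRep Jg mul α β Vg ρ αV βV)
    (hT : IsOOperator Jg mul α β Vg ρ αV βV 0 T) (hcirc : ∀ u v : V, circ u v = ρ (T u) v)
    (hstar : ∀ p q (u v : V), u ∈ Vg p → v ∈ Vg q →
        star u v = circ u v + sgn 𝕜 p q • circ (αV.symm (βV v)) (αV (βV.symm u)))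
    {px py pz : ZMod 2} {x y z : V} (hx : x ∈ Vg px) (hy : y ∈ Vg py) (hz : z ∈ Vg pz)
    (t : V) :
    sgn 𝕜 px pz • circ (αV (αV (βV (βV x))))
        (circ (star (αV (βV y)) (αV (αV z))) (αV (αV (αV t)))) +
      sgn 𝕜 py px • circ (αV (αV (βV (βV y))))
        (circ (star (αV (βV z)) (αV (αV x))) (αV (αV (αV t)))) +
      sgn 𝕜 pz py • circ (αV (αV (βV (βV z))))
        (circ (star (αV (βV x)) (αV (αV y))) (αV (αV (αV t)))) =
    sgn 𝕜 px pz • circ (star (αV (βV (βV x))) (αV (αV (βV y))))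
        (circ (αV (αV (βV z))) (αV (αV (αV t)))) +
      sgn 𝕜 py px • circ (star (αV (βV (βV y))) (αV (αV (βV z))))
        (circ (αV (αV (βV x))) (αV (αV (αV t)))) +
      sgn 𝕜 pz py • circ (star (αV (βV (βV z))) (αV (αV (βV x))))
        (circ (αV (αV (βV y))) (αV (αV (αV t)))) := by
  obtain ⟨-, hα, hβ, -, -, -, -, hax⟩ := hrep
  have hTs {p q : ZMod 2} {u v : V} (hu : u ∈ Vg p) (hv : v ∈ Vg q) :=
    hT.map_star hcirc hstar hu hv
  simp only [hcirc]
  rw [hTs (hα _ _ (hβ _ _ hy)) (hα _ _ (hα _ _ hz)),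
    hTs (hα _ _ (hβ _ _ hz)) (hα _ _ (hα _ _ hx)),
    hTs (hα _ _ (hβ _ _ hx)) (hα _ _ (hα _ _ hy)),
    hTs (hα _ _ (hβ _ _ (hβ _ _ hx))) (hα _ _ (hα _ _ (hβ _ _ hy))),
    hTs (hα _ _ (hβ _ _ (hβ _ _ hy))) (hα _ _ (hα _ _ (hβ _ _ hz))),
    hTs (hα _ _ (hβ _ _ (hβ _ _ hz))) (hα _ _ (hα _ _ (hβ _ _ hx)))]
  simp only [← hT.2.1, ← hT.2.2.1]
  exact hax px py pz _ _ _ (hT.mem_of_mem hx) (hT.mem_of_mem hy) (hT.mem_of_mem hz) t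

end OOperator

theorem stmt8_general {𝕜 J V : Type*} [Field 𝕜]
    [AddCommGroup J] [Module 𝕜 J] [AddCommGroup V] [Module 𝕜 V]
    (Jg : ZMod 2 → Submodule 𝕜 J) (mul : J →ₗ[𝕜] J →ₗ[𝕜] J) (α β : J →ₗ[𝕜] J)
    (Vg : ZMod 2 → Submodule 𝕜 V) (ρ : J →ₗ[𝕜] V →ₗ[𝕜] V) (αV βV : V ≃ₗ[𝕜] V)
    (hrep : IsRep Jg mul α β Vg ρ αV βV)
    (T : V →ₗ[𝕜] J)
    (hT : IsOOperator Jg mul α β Vg ρ αV βV 0 T)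
    (circ : V →ₗ[𝕜] V →ₗ[𝕜] V)
    (hcirc : ∀ u v : V, circ u v = ρ (T u) v)
    (star : V →ₗ[𝕜] V →ₗ[𝕜] V)
    (hstar : ∀ p q (u v : V), u ∈ Vg p → v ∈ Vg q →
        star u v = circ u v + sgn 𝕜 p q • circ (αV.symm (βV v)) (αV (βV.symm u))) :
    IsBiHomPreJordanSuper Vg circ star αV βV := by
  have ⟨_, hα, hβ, hcom, hαρ, hβρ, _, _⟩ := hrep
  have ⟨_, hTα, hTβ, _⟩ := hT
  refine ⟨fun _ _ _ _ hu hv => hrep.mem_circ hT hcirc hu hv, hα, hβ, hcom, ?_, ?_, hstar,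
    fun _ _ _ _ _ _ _ t hx hy hz _ => hT.preJordan_first_identity hrep hcirc hstar hx hy hz t,
    fun _ _ _ _ _ _ _ t hx hy hz _ => hT.preJordan_second_identity hrep hcirc hstar hx hy hz t⟩
  · intro u v
    rw [hcirc, hcirc, hαρ, hTα]
  · intro u v
    rw [hcirc, hcirc, hβρ, hTβ]

/-- an even `𝒪`-operator induces a BiHom-pre-Jordan superalgebra structure
on `V` via `u ∘ v = ρ(T u) v`. -/
theorem stmt8 {𝕜 J V : Type*} [Field 𝕜] [CharZero 𝕜]
    [AddCommGroup J] [Module 𝕜 J] [AddCommGroup V] [Module 𝕜 V]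
    (Jg : ZMod 2 → Submodule 𝕜 J) (mul : J →ₗ[𝕜] J →ₗ[𝕜] J) (α β : J →ₗ[𝕜] J)
    (hBJ : IsBiHomJordanSuper Jg mul α β)
    (Vg : ZMod 2 → Submodule 𝕜 V) (ρ : J →ₗ[𝕜] V →ₗ[𝕜] V) (αV βV : V ≃ₗ[𝕜] V)
    (hrep : IsRep Jg mul α β Vg ρ αV βV)
    (T : V →ₗ[𝕜] J)
    (hT : IsOOperator Jg mul α β Vg ρ αV βV 0 T)
    (circ : V →ₗ[𝕜] V →ₗ[𝕜] V)
    (hcirc : ∀ u v : V, circ u v = ρ (T u) v)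
    (star : V →ₗ[𝕜] V →ₗ[𝕜] V)
    (hstar : ∀ p q (u v : V), u ∈ Vg p → v ∈ Vg q →
        star u v = circ u v + sgn 𝕜 p q • circ (αV.symm (βV v)) (αV (βV.symm u))) :
    IsBiHomPreJordanSuper Vg circ star αV βV :=
  stmt8_general Jg mul α β Vg ρ αV βV hrep T hT circ hcirc star hstar
end
end
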